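/- arXiv:2402.13591 — 4 statements merged into one kernel-verified Lean document; each statement's English description precedes it below -/
import Mathlib

section
/- Let G = (V,E) be a cactus graph. For any S ⊆ V with |δ(S)| ≥ 3, the graph H_S = (V, E \ δ(S)) has at least three connected components. -/
/-- The cut-set of `S`: edges of `G` with exactly one endpoint in `S`. -/
def cutSet {V : Type*} (G : SimpleGraph V) (S : Set V) : Set (Sym2 V) :=
  {e | e ∈ G.edgeSet ∧ ∃ u v, e = s(u, v) ∧ u ∈ S ∧ v ∉ S}

/-- A cactus: a connected graph in which every edge belongs to at most one simple cycle
(any two simple cycles through a common edge have the same edge set). -/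
def IsCactus {V : Type*} (G : SimpleGraph V) : Prop :=
  G.Connected ∧ ∀ e ∈ G.edgeSet, ∀ (u v : V) (c : G.Walk u u) (d : G.Walk v v),
    c.IsCycle → d.IsCycle → e ∈ c.edges → e ∈ d.edges →
    {e' | e' ∈ c.edges} = {e' | e' ∈ d.edges}

/-!
Suppose `H_S` had at most two components. As `H_S` has no edge between `S` and its complement
while some cut edge meets both, `S` and `V \ S` would each be connected in `H_S`. For distinct
cut edges `e₁, e₂, e₃`, the edge `e₁` then lies on a cycle avoiding every cut edge but `e₁, e₂`
(return through `S`, cross along `e₂`, come back through `V \ S`), and likewise for `e₁, e₃`.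
In a cactus these two cycles have the same edges, so `e₁` lies on a cycle avoiding every other
cut edge; the rest of that cycle joins the endpoints of `e₁` inside `H_S`, which is impossible.
Lying on a cycle appears as not being a bridge (`isBridge_iff_forall_cycle_notMem`).
-/

open SimpleGraph

section

variable {V : Type*} {G : SimpleGraph V} {S : Set V}

lemma mem_iff_of_adj_deleteEdges_cutSet {u v : V} (h : (G.deleteEdges (cutSet G S)).Adj u v) :
    u ∈ S ↔ v ∈ S := by
  rw [deleteEdges_adj] at h
  constructor
  · intro hu
    by_contra hv
    exact h.2 ⟨h.1, u, v, rfl, hu, hv⟩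
  · intro hv
    by_contra hu
    exact h.2 ⟨h.1, v, u, Sym2.eq_swap, hv, hu⟩

lemma mem_iff_of_reachable_deleteEdges_cutSet {u v : V}
    (h : (G.deleteEdges (cutSet G S)).Reachable u v) : u ∈ S ↔ v ∈ S := by
  replace h := (reachable_iff_reflTransGen u v).mp h
  induction h with
  | refl => rfl
  | tail _ hadj ih => exact ih.trans (mem_iff_of_adj_deleteEdges_cutSet hadj)

lemma reachable_deleteEdges_cutSet_of_natCard_lt_three [Finite V]
    (hcard : Nat.card (G.deleteEdges (cutSet G S)).ConnectedComponent < 3)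
    (hcut : (cutSet G S).Nonempty) (u v : V) (huv : u ∈ S ↔ v ∈ S) :
    (G.deleteEdges (cutSet G S)).Reachable u v := by
  set H := G.deleteEdges (cutSet G S)
  obtain ⟨-, x, y, -, hx, hy⟩ := hcut.some_mem
  have hne {a b : V} (ha : a ∈ S) (hb : b ∉ S) :
      H.connectedComponentMk a ≠ H.connectedComponentMk b := fun h => hb ((mem_iff_of_reachable_deleteEdges_cutSet (ConnectedComponent.eq.mp h)).mp ha)
  by_contra hreach
  have huv_ne : H.connectedComponentMk u ≠ H.connectedComponentMk v :=
    fun h => hreach (ConnectedComponent.eq.mp h)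
  have := Fintype.ofFinite H.ConnectedComponent
  rw [Nat.card_eq_fintype_card] at hcard
  refine hcard.not_ge (Fintype.two_lt_card_iff.mpr ?_)
  by_cases hu : u ∈ S
  · exact ⟨_, _, _, huv_ne, hne hu hy, hne (huv.mp hu) hy⟩
  · exact ⟨_, _, _, huv_ne, (hne hx hu).symm, (hne hx (huv.not.mp hu)).symm⟩

lemma isBridge_deleteEdges_of_cutSet_diff_subset {e : Sym2 V} {D : Set (Sym2 V)}
    (he : e ∈ cutSet G S) (hD : cutSet G S \ {e} ⊆ D) : (G.deleteEdges D).IsBridge e := by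
  obtain ⟨-, a, b, rfl, ha, hb⟩ := he
  rw [isBridge_iff, deleteEdges_deleteEdges]
  intro hab
  have hle : G.deleteEdges (D ∪ {s(a, b)}) ≤ G.deleteEdges (cutSet G S) :=
    deleteEdges_anti (Set.sdiff_subset_iff.mp hD |>.trans (Set.union_comm _ _).le)
  exact hb ((mem_iff_of_reachable_deleteEdges_cutSet (hab.mono hle)).mp ha)

lemma not_isBridge_deleteEdges_cutSet_diff_pair {e e' : Sym2 V} (he : e ∈ cutSet G S)
    (he' : e' ∈ cutSet G S) (hne : e ≠ e')
    (hsides : ∀ u v, (u ∈ S ↔ v ∈ S) → (G.deleteEdges (cutSet G S)).Reachable u v) :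
    ¬(G.deleteEdges (cutSet G S \ {e, e'})).IsBridge e := by
  have hle : G.deleteEdges (cutSet G S) ≤ G.deleteEdges (cutSet G S \ {e, e'} ∪ {e}) :=
    deleteEdges_anti (Set.union_subset Set.sdiff_subset (Set.singleton_subset_iff.mpr he))
  obtain ⟨-, a, b, rfl, ha, hb⟩ := he
  obtain ⟨he'_edge, a', b', rfl, ha', hb'⟩ := he'
  have hadj : (G.deleteEdges (cutSet G S \ {s(a, b), s(a', b')} ∪ {s(a, b)})).Adj a' b' := by
    rw [deleteEdges_adj]
    exact ⟨he'_edge, by simp [hne.symm]⟩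
  rw [isBridge_iff, not_not, deleteEdges_deleteEdges]
  exact ((hsides a a' (iff_of_true ha ha')).mono hle).trans
    (hadj.reachable.trans ((hsides b' b (iff_of_false hb' hb)).mono hle))

lemma IsCactus.not_isBridge_deleteEdges_union (hG : IsCactus G) {A B : Set (Sym2 V)}
    {e : Sym2 V} (he : e ∈ G.edgeSet \ (A ∪ B)) (hA : ¬(G.deleteEdges A).IsBridge e)
    (hB : ¬(G.deleteEdges B).IsBridge e) : ¬(G.deleteEdges (A ∪ B)).IsBridge e := by
  have he' {D : Set (Sym2 V)} (hD : D ⊆ A ∪ B) : e ∈ (G.deleteEdges D).edgeSet :=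
    (edgeSet_deleteEdges D).symm ▸ ⟨he.1, fun h => he.2 (hD h)⟩
  rw [isBridge_iff_forall_cycle_notMem (he' Set.subset_union_left)] at hA
  rw [isBridge_iff_forall_cycle_notMem (he' Set.subset_union_right)] at hB
  push Not at hA hB
  obtain ⟨u, c, hc, hec⟩ := hA
  obtain ⟨v, d, hd, hed⟩ := hB
  have hcd := hG.2 e he.1 u v (c.mapLe (deleteEdges_le A)) (d.mapLe (deleteEdges_le B))
    (hc.mapLe _) (hd.mapLe _) (by rwa [Walk.edges_mapLe_eq_edges])
    (by rwa [Walk.edges_mapLe_eq_edges])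
  simp only [Walk.edges_mapLe_eq_edges] at hcd
  have hc_edges : ∀ e' ∈ c.edges, e' ∈ (G.deleteEdges (A ∪ B)).edgeSet := by
    intro e' he'c
    have hA' := c.edges_subset_edgeSet he'c
    have hB' := d.edges_subset_edgeSet (hcd ▸ he'c : e' ∈ {e' | e' ∈ d.edges})
    rw [edgeSet_deleteEdges] at hA' hB' ⊢
    exact ⟨hA'.1, fun h => h.elim hA'.2 hB'.2⟩
  rw [isBridge_iff_forall_cycle_notMem (he' subset_rfl)]
  push Not
  exact ⟨u, c.transfer _ hc_edges, hc.transfer hc_edges, by rwa [Walk.edges_transfer]⟩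

end

theorem cactus_three_components {V : Type*} [Fintype V] (G : SimpleGraph V)
    (hG : IsCactus G) (S : Set V) (hS : 3 ≤ (cutSet G S).ncard) :
    3 ≤ Nat.card (G.deleteEdges (cutSet G S)).ConnectedComponent := by
  by_contra! hcard
  obtain ⟨e₁, he₁, e₂, he₂, e₃, he₃, h₁₂, h₁₃, h₂₃⟩ := (Set.two_lt_ncard).mp hS
  have hsides := reachable_deleteEdges_cutSet_of_natCard_lt_three hcard ⟨e₁, he₁⟩
  have hcover : cutSet G S \ {e₁} ⊆ (cutSet G S \ {e₁, e₂}) ∪ (cutSet G S \ {e₁, e₃}) := by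
    rintro e ⟨he, hne₁⟩
    by_cases e = e₂ <;> simp_all
  have he₁_mem : e₁ ∈ G.edgeSet \ ((cutSet G S \ {e₁, e₂}) ∪ (cutSet G S \ {e₁, e₃})) := by
    simp [he₁.1]
  exact hG.not_isBridge_deleteEdges_union he₁_mem
    (not_isBridge_deleteEdges_cutSet_diff_pair he₁ he₂ h₁₂ hsides)
    (not_isBridge_deleteEdges_cutSet_diff_pair he₁ he₃ h₁₃ hsides)
    (isBridge_deleteEdges_of_cutSet_diff_subset he₁ hcover)
end

section
/- Let G = (V,E) be an almost tree (2): a connected graph in which every biconnected component has at most 2 edges outside a spanning tree of that component. Then for any S ⊆ V with |δ(S)| ≥ 4, the graph (V, E \ δ(S)) has at least three connected components. -/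
/-- A subgraph is biconnected if it is connected and has no cut vertex. -/
def IsBiconnected {V : Type*} (G : SimpleGraph V) (H : G.Subgraph) : Prop :=
  H.Connected ∧ ∀ v ∈ H.verts, ((H.deleteVerts {v}).coe).Connected

/-- An almost tree (2): a connected graph each of whose maximal biconnected components
has cycle rank at most 2, i.e. at most `|vertices| + 1` edges. -/
def IsAlmostTree2 {V : Type*} [Fintype V] (G : SimpleGraph V) : Prop :=
  G.Connected ∧ ∀ H : G.Subgraph, Maximal (IsBiconnected G) H →
    H.edgeSet.ncard ≤ H.verts.ncard + 1

/-!
If `G - δ(S)` had at most two components, they would be exactly `S` and its complement (a cut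
edge `uv` joins vertices in different components), so putting back any single cut edge `e`
reconnects the graph. A walk between two vertices of a block `H` can be rerouted inside `H` using
only edges of the walk, because an excursion that leaves `H` and returns at another vertex would
enlarge the block. Taking `H` to be the block of `uv`, the graph `H - (δ(S) \ {e})` is therefore
connected for every cut edge `e`; as `e` is its only edge across the cut, `δ(S) ⊆ E(H)`. For
`e = uv` this is a connected graph on `|V(H)|` vertices with at most
`|E(H)| - |δ(S)| + 1 ≤ |V(H)| - 2` edges.
-/

lemma eq_or_eq_of_natCard_le_two {α : Type*} [Finite α] (h : Nat.card α ≤ 2) {x y : α}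
    (hxy : x ≠ y) (z : α) : z = x ∨ z = y := by
  by_contra! hz
  have h3 : ({z, x, y} : Set α).ncard = 3 :=
    Set.ncard_eq_three.2 ⟨z, x, y, hz.1, hz.2, hxy, rfl⟩
  have := Set.ncard_le_card ({z, x, y} : Set α)
  omega

namespace SimpleGraph

variable {V : Type*} {G : SimpleGraph V}

namespace Subgraph

lemma deleteVerts_sup (H K : G.Subgraph) (s : Set V) :
    (H ⊔ K).deleteVerts s = H.deleteVerts s ⊔ K.deleteVerts s := by
  ext v w
  · simp [Set.union_sdiff_distrib]
  · simp only [deleteVerts_adj, sup_adj, verts_sup, Set.mem_union]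
    constructor
    · rintro ⟨-, hv, -, hw, h | h⟩
      · exact .inl ⟨H.edge_vert h, hv, H.edge_vert h.symm, hw, h⟩
      · exact .inr ⟨K.edge_vert h, hv, K.edge_vert h.symm, hw, h⟩
    · rintro (⟨h₁, hv, h₂, hw, h⟩ | ⟨h₁, hv, h₂, hw, h⟩)
      · exact ⟨.inl h₁, hv, .inl h₂, hw, .inl h⟩
      · exact ⟨.inr h₁, hv, .inr h₂, hw, .inr h⟩

lemma le_deleteVerts {K L : G.Subgraph} {s : Set V} (h : K ≤ L) (hs : Disjoint K.verts s) :
    K ≤ L.deleteVerts s :=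
  ⟨fun _ hv ↦ ⟨h.1 hv, hs.notMem_of_mem_left hv⟩, fun _ _ hab ↦
    deleteVerts_adj.2 ⟨h.1 (K.edge_vert hab), hs.notMem_of_mem_left (K.edge_vert hab),
      h.1 (K.edge_vert hab.symm), hs.notMem_of_mem_left (K.edge_vert hab.symm), h.2 hab⟩⟩

lemma deleteVerts_eq_self {H : G.Subgraph} {s : Set V} (hs : Disjoint H.verts s) :
    H.deleteVerts s = H :=
  le_antisymm deleteVerts_le (le_deleteVerts le_rfl hs)

lemma connected_of_verts_eq_singleton {H : G.Subgraph} {z : V} (h : H.verts = {z}) :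
    H.Connected := by
  have : Subsingleton H.verts := by rw [h]; infer_instance
  exact (Subgraph.connected_iff).2 ⟨⟨.of_subsingleton⟩, h ▸ Set.singleton_nonempty z⟩

lemma reachable_of_walk_le {H : G.Subgraph} {u v : V} (p : G.Walk u v)
    (h : p.toSubgraph ≤ H) :
    H.coe.Reachable ⟨u, h.1 p.start_mem_verts_toSubgraph⟩
      ⟨v, h.1 p.end_mem_verts_toSubgraph⟩ :=
  (p.toSubgraph_connected ⟨u, p.start_mem_verts_toSubgraph⟩
    ⟨v, p.end_mem_verts_toSubgraph⟩).map (inclusion h)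

lemma Connected.sup_of_forall_exists_walk {H K : G.Subgraph} (hH : H.Connected)
    (hK : ∀ v ∈ K.verts, ∃ z ∈ H.verts, ∃ p : G.Walk v z, p.toSubgraph ≤ K) :
    (H ⊔ K).Connected := by
  obtain ⟨z₀, hz₀⟩ := hH.nonempty
  have reach_H {z} (hz : z ∈ H.verts) :
      (H ⊔ K).coe.Reachable ⟨z₀, .inl hz₀⟩ ⟨z, .inl hz⟩ :=
    (hH ⟨z₀, hz₀⟩ ⟨z, hz⟩).map (inclusion le_sup_left)
  rw [Subgraph.connected_iff', connected_iff_exists_forall_reachable]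
  refine ⟨⟨z₀, .inl hz₀⟩, ?_⟩
  rintro ⟨v, hv | hv⟩
  · exact reach_H hv
  · obtain ⟨z, hz, p, hp⟩ := hK v hv
    exact (reach_H hz).trans (reachable_of_walk_le p (hp.trans le_sup_right)).symm

lemma Connected.ncard_verts_le_ncard_edgeSet_add_one [Finite V] {H : G.Subgraph}
    (h : H.Connected) : H.verts.ncard ≤ H.edgeSet.ncard + 1 := by
  calc H.verts.ncard = Nat.card H.verts := (Nat.card_coe_set_eq _).symm
    _ ≤ Nat.card H.coe.edgeSet + 1 := h.coe.card_vert_le_card_edgeSet_add_one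
    _ = H.edgeSet.ncard + 1 := by
      rw [← H.image_coe_edgeSet_coe,
        Set.ncard_image_of_injective _ (Sym2.map.injective Subtype.val_injective),
        Nat.card_coe_set_eq]

lemma edgeSet_deleteEdges (H : G.Subgraph) (F : Set (Sym2 V)) :
    (H.deleteEdges F).edgeSet = H.edgeSet \ F := by
  ext e; induction e using Sym2.ind; simp

end Subgraph

namespace Walk

lemma IsPath.exists_walk_to_end_avoiding {x y v w : V} {p : G.Walk x y} (hp : p.IsPath)
    (hv : v ∈ p.support) (hvw : v ≠ w) :
    ∃ z, (z = x ∨ z = y) ∧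
      ∃ q : G.Walk v z, q.toSubgraph ≤ p.toSubgraph.deleteVerts {w} := by
  obtain ⟨A, B, rfl⟩ := Walk.mem_support_iff_exists_append.1 hv
  have hnodup := hp.support_nodup
  rw [support_append, List.nodup_append] at hnodup
  by_cases hwA : w ∈ A.support
  · have hwB : w ∉ B.support := by
      rw [← cons_tail_support, List.mem_cons]
      rintro (rfl | hwB)
      exacts [hvw rfl, hnodup.2.2 w hwA w hwB rfl]
    refine ⟨y, .inr rfl, B, Subgraph.le_deleteVerts ?_ ?_⟩
    · rw [toSubgraph_append]; exact le_sup_right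
    · rwa [Set.disjoint_singleton_right, mem_verts_toSubgraph]
  · refine ⟨x, .inl rfl, A.reverse, Subgraph.le_deleteVerts ?_ ?_⟩
    · rw [toSubgraph_reverse, toSubgraph_append]; exact le_sup_left
    · rwa [Set.disjoint_singleton_right, mem_verts_toSubgraph, support_reverse,
        List.mem_reverse]

lemma IsPath.mk_mem_edges_of_support_subset {x y : V} {p : G.Walk x y} (hp : p.IsPath)
    (hxy : x ≠ y) (hsupp : ∀ z ∈ p.support, z = x ∨ z = y) : s(x, y) ∈ p.edges := by
  cases p with
  | nil => exact absurd rfl hxy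
  | @cons _ c _ h q =>
    rw [cons_isPath_iff] at hp
    obtain rfl : c = y := (hsupp c (by simp)).resolve_left
      (by rintro rfl; exact hp.2 q.start_mem_support)
    obtain rfl : q = Walk.nil := (isPath_iff_nil.1 hp.1).eq_nil
    simp

end Walk

lemma connected_deleteEdges_sdiff_singleton [Finite V] {F : Set (Sym2 V)}
    (hF : Nat.card (G.deleteEdges F).ConnectedComponent ≤ 2) {a c : V} (hac : G.Adj a c)
    (hnr : ¬(G.deleteEdges F).Reachable a c) : (G.deleteEdges (F \ {s(a, c)})).Connected := by
  have hmono : G.deleteEdges F ≤ G.deleteEdges (F \ {s(a, c)}) :=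
    deleteEdges_anti Set.sdiff_subset
  have hadj : (G.deleteEdges (F \ {s(a, c)})).Adj a c :=
    (deleteEdges_adj ..).2 ⟨hac, fun h ↦ h.2 (Set.mem_singleton _)⟩
  refine (connected_iff_exists_forall_reachable _).2 ⟨a, fun w ↦ ?_⟩
  rcases eq_or_eq_of_natCard_le_two hF (fun h ↦ hnr (ConnectedComponent.exact h))
    ((G.deleteEdges F).connectedComponentMk w) with h | h
  · exact (ConnectedComponent.exact h).symm.mono hmono
  · exact hadj.reachable.trans ((ConnectedComponent.exact h).symm.mono hmono)

end SimpleGraph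

open SimpleGraph

section Blocks

variable {V : Type*} {G : SimpleGraph V} {H : G.Subgraph}

lemma isBiconnected_subgraphOfAdj {u v : V} (huv : G.Adj u v) :
    IsBiconnected G (G.subgraphOfAdj huv) := by
  refine ⟨Subgraph.subgraphOfAdj_connected huv, fun w hw ↦ ?_⟩
  rw [← Subgraph.connected_iff']
  rcases hw with rfl | rfl
  · exact Subgraph.connected_of_verts_eq_singleton (z := v)
      (by rw [Subgraph.deleteVerts_verts, subgraphOfAdj_verts, Set.pair_sdiff_left huv.ne])
  · exact Subgraph.connected_of_verts_eq_singleton (z := u)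
      (by rw [Subgraph.deleteVerts_verts, subgraphOfAdj_verts, Set.pair_sdiff_right huv.ne])

lemma IsBiconnected.sup_toSubgraph (hH : IsBiconnected G H) {x y : V} (hx : x ∈ H.verts)
    (hy : y ∈ H.verts) {p : G.Walk x y} (hp : p.IsPath) :
    IsBiconnected G (H ⊔ p.toSubgraph) := by
  refine ⟨Subgraph.connected_sup hH.1.preconnected p.toSubgraph_connected.preconnected
    ⟨x, hx, p.start_mem_verts_toSubgraph⟩, fun w _ ↦ ?_⟩
  have hHw : (H.deleteVerts {w}).Connected := by
    by_cases hwH : w ∈ H.verts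
    · exact Subgraph.connected_iff'.2 (hH.2 w hwH)
    · rw [Subgraph.deleteVerts_eq_self (Set.disjoint_singleton_right.2 hwH)]; exact hH.1
  rw [← Subgraph.connected_iff', Subgraph.deleteVerts_sup]
  refine hHw.sup_of_forall_exists_walk fun v hv ↦ ?_
  obtain ⟨hvp, hvw⟩ := hv
  obtain ⟨z, hz, q, hq⟩ := hp.exists_walk_to_end_avoiding (p.mem_verts_toSubgraph.1 hvp) hvw
  have hzH : z ∈ H.verts := by rcases hz with rfl | rfl <;> assumption
  exact ⟨z, ⟨hzH, (hq.1 q.end_mem_verts_toSubgraph).2⟩, q, hq⟩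

lemma toSubgraph_le_of_maximal_isBiconnected (hH : Maximal (IsBiconnected G) H) {x y : V}
    (hx : x ∈ H.verts) (hy : y ∈ H.verts) {p : G.Walk x y} (hp : p.IsPath) :
    p.toSubgraph ≤ H :=
  le_sup_right.trans (hH.2 (hH.1.sup_toSubgraph hx hy hp) le_sup_left)

lemma adj_of_maximal_isBiconnected (hH : Maximal (IsBiconnected G) H) {a b : V}
    (ha : a ∈ H.verts) (hb : b ∈ H.verts) (hab : G.Adj a b) : H.Adj a b :=
  (toSubgraph_le_of_maximal_isBiconnected hH ha hb (Walk.IsPath.of_adj hab)).2 (by simp)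

lemma mk_mem_edges_of_maximal_isBiconnected (hH : Maximal (IsBiconnected G) H) {x y : V}
    (hx : x ∈ H.verts) (hy : y ∈ H.verts) (hxy : x ≠ y) (p : G.Walk x y)
    (hp : ∀ z ∈ p.support, z ∈ H.verts → z = x ∨ z = y) :
    s(x, y) ∈ p.edges := by
  classical
  have hle := toSubgraph_le_of_maximal_isBiconnected hH hx hy p.bypass_isPath
  refine p.edges_bypass_subset_edges (p.bypass_isPath.mk_mem_edges_of_support_subset hxy ?_)
  exact fun z hz ↦ hp z (p.support_bypass_subset_support hz)
    (hle.1 (p.bypass.mem_verts_toSubgraph.2 hz))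

/-- `q` is the part of the walk since it last visited `H`, at `z`. -/
lemma reachable_deleteEdges_coe_of_walk (hH : Maximal (IsBiconnected G) H) {F : Set (Sym2 V)}
    {a y : V} (p : (G.deleteEdges F).Walk a y) (hy : y ∈ H.verts) :
    ∀ {z : V} (hz : z ∈ H.verts) (q : (G.deleteEdges F).Walk z a),
      (∀ w ∈ q.support, w ∈ H.verts → w = z) →
      (H.deleteEdges F).coe.Reachable ⟨z, hz⟩ ⟨y, hy⟩ := by
  induction p with
  | nil =>
    intro z hz q hq
    obtain rfl := hq _ q.end_mem_support hy
    rfl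
  | @cons a b y hab p ih =>
    intro z hz q hq
    have hq' : ∀ w ∈ (q.concat hab).support, w ∈ H.verts → w = z ∨ w = b := by
      intro w hw hwH
      rw [Walk.support_concat, List.mem_append, List.mem_singleton] at hw
      exact hw.imp (hq w · hwH) id
    by_cases hb : b ∈ H.verts
    · refine Reachable.trans ?_ (ih hy hb .nil (by simp))
      by_cases hzb : z = b
      · subst hzb; rfl
      have hedge := mk_mem_edges_of_maximal_isBiconnected hH hz hb hzb
        ((q.concat hab).mapLe (G.deleteEdges_le F)) (by rwa [Walk.support_mapLe_eq_support])
      rw [Walk.edges_mapLe_eq_edges] at hedge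
      obtain ⟨hGzb, hzbF⟩ := (deleteEdges_adj ..).1 ((q.concat hab).adj_of_mem_edges hedge)
      exact Adj.reachable (⟨adj_of_maximal_isBiconnected hH hz hb hGzb, hzbF⟩ :
        H.Adj z b ∧ s(z, b) ∉ F)
    · refine ih hy hz (q.concat hab) fun w hw hwH ↦ ?_
      exact (hq' w hw hwH).resolve_right (by rintro rfl; exact hb hwH)

lemma reachable_deleteEdges_coe_of_maximal_isBiconnected (hH : Maximal (IsBiconnected G) H)
    {F : Set (Sym2 V)} {x y : V} (hx : x ∈ H.verts) (hy : y ∈ H.verts)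
    (hxy : (G.deleteEdges F).Reachable x y) :
    (H.deleteEdges F).coe.Reachable ⟨x, hx⟩ ⟨y, hy⟩ :=
  let ⟨p⟩ := hxy
  reachable_deleteEdges_coe_of_walk hH p hy hx .nil (by simp)

lemma connected_deleteEdges_of_maximal_isBiconnected (hH : Maximal (IsBiconnected G) H)
    {F : Set (Sym2 V)} (hF : (G.deleteEdges F).Connected) (hne : H.verts.Nonempty) :
    (H.deleteEdges F).Connected := by
  refine Subgraph.connected_iff.2 ⟨⟨fun x y ↦ ?_⟩, hne⟩
  exact reachable_deleteEdges_coe_of_maximal_isBiconnected hH x.2 y.2 (hF.preconnected x y)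

end Blocks

section Cut

variable {V : Type*} {G : SimpleGraph V} {S : Set V}

lemma mk_mem_cutSet {a b : V} (hab : G.Adj a b) (ha : a ∈ S) (hb : b ∉ S) :
    s(a, b) ∈ cutSet G S :=
  ⟨hab, a, b, rfl, ha, hb⟩

lemma mem_iff_mem_of_reachable_deleteEdges_cutSet {a b : V}
    (h : (G.deleteEdges (cutSet G S)).Reachable a b) : a ∈ S ↔ b ∈ S := by
  obtain ⟨p⟩ := h
  induction p with
  | nil => rfl
  | @cons a c _ hac _ ih =>
    rw [deleteEdges_adj] at hac
    refine Iff.trans ⟨fun ha ↦ ?_, fun hc ↦ ?_⟩ ih <;> by_contra hnot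
    · exact hac.2 (mk_mem_cutSet hac.1 ha hnot)
    · exact hac.2 (Sym2.eq_swap ▸ mk_mem_cutSet hac.1.symm hc hnot)

lemma cutSet_subset_edgeSet_of_maximal_isBiconnected [Finite V] {H : G.Subgraph}
    (hH : Maximal (IsBiconnected G) H) {u v : V} (huH : u ∈ H.verts) (hvH : v ∈ H.verts)
    (hu : u ∈ S) (hv : v ∉ S)
    (hcard : Nat.card (G.deleteEdges (cutSet G S)).ConnectedComponent ≤ 2) :
    cutSet G S ⊆ H.edgeSet := by
  rintro _ ⟨hac, a, c, rfl, ha, hc⟩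
  have hconn := connected_deleteEdges_sdiff_singleton hcard hac
    (fun h ↦ hc ((mem_iff_mem_of_reachable_deleteEdges_cutSet h).1 ha))
  obtain ⟨r⟩ := reachable_deleteEdges_coe_of_maximal_isBiconnected hH huH hvH
    (hconn.preconnected u v)
  obtain ⟨d, -, hd, hd'⟩ := r.exists_boundary_dart {x | x.1 ∈ S} hu hv
  obtain ⟨hHd, hdF⟩ := (Subgraph.deleteEdges_adj _ _ _).1 d.adj
  have hde : s(d.fst.1, d.snd.1) = s(a, c) := by
    by_contra hne
    exact hdF ⟨mk_mem_cutSet (H.adj_sub hHd) hd hd', hne⟩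
  exact hde ▸ hHd

end Cut

theorem almostTree2_three_components {V : Type*} [Fintype V] (G : SimpleGraph V)
    (hG : IsAlmostTree2 G) (S : Set V) (hS : 4 ≤ (cutSet G S).ncard) :
    3 ≤ Nat.card (G.deleteEdges (cutSet G S)).ConnectedComponent := by
  by_contra! hcard
  obtain ⟨_, huv, u, v, rfl, hu, hv⟩ :=
    Set.nonempty_of_ncard_ne_zero (s := cutSet G S) (by omega)
  rw [mem_edgeSet] at huv
  obtain ⟨H, hle, hH⟩ := Finite.exists_le_maximal (isBiconnected_subgraphOfAdj huv)
  have huH : u ∈ H.verts := hle.1 (by simp)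
  have hvH : v ∈ H.verts := hle.1 (by simp)
  have hcutH := cutSet_subset_edgeSet_of_maximal_isBiconnected hH huH hvH hu hv (by omega)
  have hconn := connected_deleteEdges_sdiff_singleton (by omega) huv
    (fun h ↦ hv ((mem_iff_mem_of_reachable_deleteEdges_cutSet h).1 hu))
  have hcount := (connected_deleteEdges_of_maximal_isBiconnected hH hconn
    ⟨u, huH⟩).ncard_verts_le_ncard_edgeSet_add_one
  rw [Subgraph.deleteEdges_verts, Subgraph.edgeSet_deleteEdges,
    Set.ncard_sdiff (Set.sdiff_subset.trans hcutH),
    Set.ncard_sdiff_singleton_of_mem (mk_mem_cutSet huv hu hv)] at hcount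
  have hcutH_card := Set.ncard_le_ncard hcutH
  have hcycleRank := hG.2 H hH
  omega
end

section
/- Let K_{n₁,n₂} be the complete bipartite graph with parts V₁, V₂, with 2 ≤ n₁ = |V₁| ≤ n₂ = |V₂|, and fix an injection ι : V₁ → V₂. There exists a family of 2^{n₁−1} subsets of V₁ ∪ V₂ of the form S ∪ ι(S) (S ⊆ V₁), pairwise non-complementary within V₁, such that for any two distinct members X, Y of the family, the graph obtained from K_{n₁,n₂} by deleting the edges of δ(X △ Y) has exactly two connected components. -/
/-- The symmetric cut `S ∪ ι(S)` of the complete bipartite graph associated with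
`S ⊆ V₁` and an injection `ι : V₁ → V₂`. -/
def symCut {V₁ V₂ : Type*} (ι : V₁ → V₂) (S : Set V₁) : Set (V₁ ⊕ V₂) :=
  Sum.inl '' S ∪ Sum.inr '' (ι '' S)

lemma mem_symCut_inl {V₁ V₂ : Type*} (ι : V₁ → V₂) (S : Set V₁) (u : V₁) :
    (Sum.inl u : V₁ ⊕ V₂) ∈ symCut ι S ↔ u ∈ S := by
  simp [symCut]

lemma mem_symCut_inr {V₁ V₂ : Type*} (ι : V₁ → V₂) (S : Set V₁) (v : V₂) :
    (Sum.inr v : V₁ ⊕ V₂) ∈ symCut ι S ↔ v ∈ ι '' S := by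
  simp [symCut]

lemma symCut_symmDiff {V₁ V₂ : Type*} (ι : V₁ → V₂) (hι : Function.Injective ι)
    (S T : Set V₁) :
    symmDiff (symCut (V₂ := V₂) ι S) (symCut ι T) = symCut ι (symmDiff S T) := by
  ext x
  cases x with
  | inl u =>
      simp only [Set.mem_symmDiff, mem_symCut_inl]
  | inr v =>
      simp only [Set.mem_symmDiff, mem_symCut_inr]
      rw [Set.image_symmDiff hι, Set.mem_symmDiff]

lemma mem_cutSet {V : Type*} (G : SimpleGraph V) (W : Set V) (x y : V) :
    s(x, y) ∈ cutSet G W ↔ s(x, y) ∈ G.edgeSet ∧ ((x ∈ W ∧ y ∉ W) ∨ (y ∈ W ∧ x ∉ W)) := by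
  unfold cutSet
  simp only [Set.mem_setOf_eq, and_congr_right_iff]
  intro _
  constructor
  · rintro ⟨u, v, huv, hu, hv⟩
    rw [Sym2.eq_iff] at huv
    rcases huv with ⟨rfl, rfl⟩ | ⟨rfl, rfl⟩
    · exact Or.inl ⟨hu, hv⟩
    · exact Or.inr ⟨hu, hv⟩
  · rintro (⟨hx, hy⟩ | ⟨hy, hx⟩)
    · exact ⟨x, y, rfl, hx, hy⟩
    · exact ⟨y, x, Sym2.eq_swap, hy, hx⟩

lemma deleteCut_adj {V : Type*} (G : SimpleGraph V) (W : Set V) (x y : V) :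
    (G.deleteEdges (cutSet G W)).Adj x y ↔ G.Adj x y ∧ (x ∈ W ↔ y ∈ W) := by
  rw [SimpleGraph.deleteEdges_adj, mem_cutSet, SimpleGraph.mem_edgeSet]
  by_cases ha : G.Adj x y
  · simp only [ha, true_and, true_iff]
    tauto
  · tauto

lemma two_components {V₁ V₂ : Type*} (ι : V₁ → V₂) (hι : Function.Injective ι) (D : Set V₁)
    (hne : D.Nonempty) (hproper : D ≠ Set.univ) :
    Nat.card ((completeBipartiteGraph V₁ V₂).deleteEdges
      (cutSet (completeBipartiteGraph V₁ V₂) (symCut ι D))).ConnectedComponent = 2 := by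
  classical
  obtain ⟨d, hd⟩ := hne
  obtain ⟨u₀, hu₀⟩ := Set.ne_univ_iff_exists_notMem D |>.mp hproper
  set G' := (completeBipartiteGraph V₁ V₂).deleteEdges
      (cutSet (completeBipartiteGraph V₁ V₂) (symCut ι D)) with hG'
  have hadj : ∀ (u : V₁) (v : V₂), G'.Adj (Sum.inl u) (Sum.inr v) ↔ (u ∈ D ↔ v ∈ ι '' D) := by
    intro u v
    rw [hG', deleteCut_adj]
    simp [mem_symCut_inl, mem_symCut_inr]
  have hv₀ : ι u₀ ∉ ι '' D := fun h => hu₀ ((hι.mem_set_image).mp h)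
  -- reachability within each side
  have hreach : ∀ x y : V₁ ⊕ V₂, (x ∈ symCut ι D ↔ y ∈ symCut ι D) → G'.Reachable x y := by
    have key : ∀ x : V₁ ⊕ V₂, (x ∈ symCut ι D → G'.Reachable x (Sum.inl d)) ∧
        (x ∉ symCut ι D → G'.Reachable x (Sum.inl u₀)) := by
      intro x
      constructor
      · intro hx
        cases x with
        | inl u =>
            have hu : u ∈ D := (mem_symCut_inl ι D u).mp hx
            have h1 : G'.Adj (Sum.inl u) (Sum.inr (ι d)) :=
              (hadj u (ι d)).mpr (by simp [hu, Set.mem_image_of_mem _ hd])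
            have h2 : G'.Adj (Sum.inl d) (Sum.inr (ι d)) :=
              (hadj d (ι d)).mpr (by simp [hd, Set.mem_image_of_mem _ hd])
            exact h1.reachable.trans h2.reachable.symm
        | inr v =>
            have hv : v ∈ ι '' D := (mem_symCut_inr ι D v).mp hx
            exact ((hadj d v).mpr (by simp [hd, hv])).reachable.symm
      · intro hx
        cases x with
        | inl u =>
            have hu : u ∉ D := fun h => hx ((mem_symCut_inl ι D u).mpr h)
            have h1 : G'.Adj (Sum.inl u) (Sum.inr (ι u₀)) :=
              (hadj u (ι u₀)).mpr (by simp [hu, hv₀])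
            have h2 : G'.Adj (Sum.inl u₀) (Sum.inr (ι u₀)) :=
              (hadj u₀ (ι u₀)).mpr (by simp [hu₀, hv₀])
            exact h1.reachable.trans h2.reachable.symm
        | inr v =>
            have hv : v ∉ ι '' D := fun h => hx ((mem_symCut_inr ι D v).mpr h)
            exact ((hadj u₀ v).mpr (by simp [hu₀, hv])).reachable.symm
    intro x y hxy
    by_cases hx : x ∈ symCut ι D
    · exact ((key x).1 hx).trans (((key y).1 (hxy.mp hx)).symm)
    · exact ((key x).2 hx).trans (((key y).2 (fun h => hx (hxy.mpr h))).symm)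
  -- membership in W is constant on components
  have hconst : ∀ (v w : V₁ ⊕ V₂), G'.Adj v w →
      decide (v ∈ symCut ι D) = decide (w ∈ symCut ι D) := by
    intro v w hvw
    rw [hG', deleteCut_adj] at hvw
    simp only [decide_eq_decide]
    exact hvw.2
  let f : G'.ConnectedComponent → Bool :=
    SimpleGraph.ConnectedComponent.lift (fun x => decide (x ∈ symCut ι D))
      (fun v w p hp => by
        clear hp
        induction p with
        | nil => rfl
        | cons h p ih => exact (hconst _ _ h).trans ih)
  have hbij : Function.Bijective f := by
    constructor
    · refine SimpleGraph.ConnectedComponent.ind₂ (fun x y hxy => ?_)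
      apply SimpleGraph.ConnectedComponent.sound
      apply hreach
      simpa [f, decide_eq_decide] using hxy
    · intro b
      cases b
      · exact ⟨G'.connectedComponentMk (Sum.inl u₀), by
          simp [f, mem_symCut_inl, hu₀]⟩
      · exact ⟨G'.connectedComponentMk (Sum.inl d), by
          simp [f, mem_symCut_inl, hd]⟩
  rw [Nat.card_congr (Equiv.ofBijective f hbij)]
  simp

theorem completeBipartite_clique_family {V₁ V₂ : Type*} [Fintype V₁] [Fintype V₂]
    (h₁ : 2 ≤ Fintype.card V₁) (h₁₂ : Fintype.card V₁ ≤ Fintype.card V₂)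
    (ι : V₁ → V₂) (hι : Function.Injective ι) :
    ∃ 𝓕 : Finset (Set V₁),
      𝓕.card = 2 ^ (Fintype.card V₁ - 1) ∧
      (∀ S ∈ 𝓕, ∀ T ∈ 𝓕, S ≠ T → T ≠ Sᶜ) ∧
      (∀ S ∈ 𝓕, ∀ T ∈ 𝓕, S ≠ T →
        Nat.card ((completeBipartiteGraph V₁ V₂).deleteEdges
          (cutSet (completeBipartiteGraph V₁ V₂)
            (symmDiff (symCut ι S) (symCut ι T)))).ConnectedComponent = 2) := by
  classical
  obtain ⟨a⟩ : Nonempty V₁ := Fintype.card_pos_iff.mp (by omega)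
  refine ⟨Finset.univ.filter (fun S : Set V₁ => a ∈ S), ?_, ?_, ?_⟩
  · have hcompl : (Finset.univ.filter (fun S : Set V₁ => a ∈ S)).card
        = (Finset.univ.filter (fun S : Set V₁ => ¬ a ∈ S)).card := by
      apply Finset.card_bij' (fun S _ => Sᶜ) (fun S _ => Sᶜ)
      · intro S _; simp
      · intro S _; simp
      · intro S hS; simp at hS ⊢; exact hS
      · intro S hS; simp at hS ⊢; exact hS
    have hsum := Finset.card_filter_add_card_filter_not
      (s := (Finset.univ : Finset (Set V₁))) (p := fun S => a ∈ S)
    rw [Finset.card_univ, Fintype.card_set] at hsum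
    have hpow : 2 ^ Fintype.card V₁ = 2 ^ (Fintype.card V₁ - 1) * 2 := by
      rw [← pow_succ]
      congr 1
      omega
    omega
  · intro S hS T hT _ hTS
    simp only [Finset.mem_filter] at hS hT
    rw [hTS] at hT
    exact hT.2 hS.2
  · intro S hS T hT hST
    simp only [Finset.mem_filter] at hS hT
    rw [symCut_symmDiff ι hι]
    apply two_components ι hι
    · rcases Set.eq_empty_or_nonempty (symmDiff S T) with h | h
      · exact absurd (symmDiff_eq_bot.mp h) hST
      · exact h
    · intro h
      have : a ∈ symmDiff S T := h ▸ Set.mem_univ a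
      rw [Set.mem_symmDiff] at this
      tauto
end

section
/- Let G = (V,E) be a connected graph, let X, Y ⊆ V, and suppose the graph H = (V, E \ δ(X △ Y)) has at least three connected components. Then there exists a nonempty proper subset L ⊆ V (the vertex set of one connected component of H) with δ(L) ⊆ δ(X △ Y), δ(L) ≠ δ(X △ Y), and the characteristic vectors satisfy v(X △ L) + v(Y △ L) = v(X) + v(Y) as vectors in ℝ^E, where moreover {δ(X△L), δ(Y△L)} ≠ {δ(X), δ(Y)}. -/
/-- The incidence (characteristic) vector of the cut `S`, as a real vector indexed by
edges (elements of `Sym2 V`). -/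
noncomputable def cutVec {V : Type*} (G : SimpleGraph V) (S : Set V) : Sym2 V → ℝ :=
  (cutSet G S).indicator fun _ => (1 : ℝ)

lemma mem_cutSet_iff {V : Type*} {G : SimpleGraph V} {S : Set V} {a b : V}
    (hab : G.Adj a b) : s(a, b) ∈ cutSet G S ↔ ¬(a ∈ S ↔ b ∈ S) := by
  constructor
  · rintro ⟨-, u, v, huv, hu, hv⟩
    rw [Sym2.eq_iff] at huv
    rcases huv with ⟨rfl, rfl⟩ | ⟨rfl, rfl⟩ <;> tauto
  · intro h
    refine ⟨hab, ?_⟩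
    by_cases ha : a ∈ S
    · exact ⟨a, b, rfl, ha, fun hb => h ⟨fun _ => hb, fun _ => ha⟩⟩
    · have hb : b ∈ S := by tauto
      exact ⟨b, a, Sym2.eq_swap.symm, hb, ha⟩

lemma card_exists_ne {α : Type*} (h : 3 ≤ Nat.card α) (a b : α) :
    ∃ c : α, c ≠ a ∧ c ≠ b := by
  by_contra hc
  push_neg at hc
  have hsurj : Function.Surjective (fun i : Fin 2 => if i = 0 then a else b) := by
    intro c
    by_cases h1 : c = a
    · exact ⟨0, by simp [h1]⟩
    · exact ⟨1, by simp [hc c h1]⟩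
  have := Nat.card_le_card_of_surjective _ hsurj
  simp [Nat.card_eq_fintype_card] at this
  omega

private lemma aux1 {p q l1 l2 : Prop} (hl1 : l1) (hl2 : ¬l2)
    (t0 : ¬((p ∧ ¬l1 ∨ l1 ∧ ¬p) ↔ (q ∧ ¬l2 ∨ l2 ∧ ¬q)) ↔ ¬(p ↔ q)) : False := by
  tauto

private lemma aux2 {p q r s l1 l2 : Prop} (hl1 : ¬l1) (hl2 : ¬l2)
    (hXY : ¬((p ∧ ¬r ∨ r ∧ ¬p) ↔ (q ∧ ¬s ∨ s ∧ ¬q)))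
    (t1 : ¬((p ∧ ¬l1 ∨ l1 ∧ ¬p) ↔ (q ∧ ¬l2 ∨ l2 ∧ ¬q)) ↔ ¬(r ↔ s)) : False := by
  tauto

theorem nonadjacency_construction {V : Type*} [Fintype V] (G : SimpleGraph V)
    (hG : G.Connected) (X Y : Set V)
    (h3 : 3 ≤ Nat.card (G.deleteEdges (cutSet G (symmDiff X Y))).ConnectedComponent) :
    ∃ L : Set V, L.Nonempty ∧ L ≠ Set.univ ∧
      (∃ c : (G.deleteEdges (cutSet G (symmDiff X Y))).ConnectedComponent, L = c.supp) ∧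
      cutSet G L ⊆ cutSet G (symmDiff X Y) ∧
      cutSet G L ≠ cutSet G (symmDiff X Y) ∧
      cutVec G (symmDiff X L) + cutVec G (symmDiff Y L) = cutVec G X + cutVec G Y ∧
      ({cutSet G (symmDiff X L), cutSet G (symmDiff Y L)} : Set (Set (Sym2 V))) ≠
        {cutSet G X, cutSet G Y} := by
  classical
  set H := G.deleteEdges (cutSet G (symmDiff X Y)) with hH
  -- the cut of X △ Y is nonempty
  have hne : (cutSet G (symmDiff X Y)).Nonempty := by
    rcases Set.eq_empty_or_nonempty (cutSet G (symmDiff X Y)) with h0 | h0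
    · exfalso
      have hHG : H = G := by
        rw [hH, h0]
        simp [SimpleGraph.deleteEdges]
      obtain ⟨x⟩ := hG.nonempty
      obtain ⟨c, hc, -⟩ := card_exists_ne h3 (H.connectedComponentMk x)
        (H.connectedComponentMk x)
      obtain ⟨y, rfl⟩ := c.exists_rep
      exact hc (SimpleGraph.ConnectedComponent.sound (hHG ▸ hG.preconnected y x))
    · exact h0
  obtain ⟨e, he⟩ := hne
  obtain ⟨heE, u, v, rfl, hu, hv⟩ := he
  have huv : G.Adj u v := heE
  have heCut : s(u, v) ∈ cutSet G (symmDiff X Y) := ⟨heE, u, v, rfl, hu, hv⟩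
  -- choose a component different from those of u and v
  obtain ⟨c, hcu, hcv⟩ := card_exists_ne h3 (H.connectedComponentMk u) (H.connectedComponentMk v)
  -- basic facts about L = c.supp
  have hsub : cutSet G c.supp ⊆ cutSet G (symmDiff X Y) := by
    rintro f ⟨hfE, p, q, rfl, hp, hq⟩
    by_contra hnf
    have hAdj : H.Adj p q := by
      rw [hH, SimpleGraph.deleteEdges_adj]
      exact ⟨hfE, hnf⟩
    rw [SimpleGraph.ConnectedComponent.mem_supp_iff] at hp
    have : q ∈ c.supp := by
      rw [SimpleGraph.ConnectedComponent.mem_supp_iff, ← hp]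
      exact (SimpleGraph.ConnectedComponent.sound hAdj.reachable).symm
    exact hq this
  have huL : u ∉ c.supp := by
    rw [SimpleGraph.ConnectedComponent.mem_supp_iff]
    exact fun h => hcu h.symm
  have hvL : v ∉ c.supp := by
    rw [SimpleGraph.ConnectedComponent.mem_supp_iff]
    exact fun h => hcv h.symm
  obtain ⟨w, hw⟩ := c.exists_rep
  have hwL : w ∈ c.supp := by
    rw [SimpleGraph.ConnectedComponent.mem_supp_iff]
    exact hw
  -- an edge crossing c.supp
  obtain ⟨d, -, hd1, hd2⟩ :=
    (hG.preconnected w u).some.exists_boundary_dart c.supp hwL huL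
  have hdadj : G.Adj d.fst d.snd := d.adj
  have hdmem : s(d.fst, d.snd) ∈ cutSet G c.supp :=
    (mem_cutSet_iff hdadj).mpr (fun h => hd2 (h.mp hd1))
  refine ⟨c.supp, ⟨w, hwL⟩, ?_, ⟨c, rfl⟩, hsub, ?_, ?_, ?_⟩
  · intro hL
    exact huL (hL ▸ Set.mem_univ u)
  · intro hEq
    have : s(u, v) ∈ cutSet G c.supp := hEq ▸ heCut
    rw [mem_cutSet_iff huv] at this
    exact this (iff_of_false huL hvL)
  · funext f
    refine f.inductionOn fun a b => ?_
    by_cases hab : G.Adj a b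
    · have hcr : ¬(a ∈ c.supp ↔ b ∈ c.supp) →
          ¬(a ∈ symmDiff X Y ↔ b ∈ symmDiff X Y) := by
        intro h
        exact (mem_cutSet_iff hab).mp (hsub ((mem_cutSet_iff hab).mpr h))
      simp only [Pi.add_apply, cutVec, Set.indicator_apply,
        mem_cutSet_iff hab, Set.mem_symmDiff]
      rw [Set.mem_symmDiff, Set.mem_symmDiff] at hcr
      by_cases hax : a ∈ X <;> by_cases hbx : b ∈ X <;> by_cases hay : a ∈ Y <;>
        by_cases hby : b ∈ Y <;> by_cases hal : a ∈ c.supp <;>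
        by_cases hbl : b ∈ c.supp <;> simp_all
    · have hz : ∀ S : Set V, cutVec G S s(a, b) = 0 := by
        intro S
        apply Set.indicator_of_notMem
        rintro ⟨hE, -⟩
        exact hab hE
      simp [hz]
  · intro hEq
    rw [Set.pair_eq_pair_iff] at hEq
    rcases hEq with ⟨h1, -⟩ | ⟨h1, -⟩
    · -- cutSet G (X △ L) = cutSet G X, contradiction via the boundary dart
      have t0 : ¬(d.fst ∈ symmDiff X c.supp ↔ d.snd ∈ symmDiff X c.supp) ↔
          ¬(d.fst ∈ X ↔ d.snd ∈ X) := by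
        exact (mem_cutSet_iff hdadj).symm.trans
          ((Set.ext_iff.mp h1 _).trans (mem_cutSet_iff hdadj))
      rw [Set.mem_symmDiff, Set.mem_symmDiff] at t0
      exact aux1 hd1 hd2 t0
    · -- cutSet G (X △ L) = cutSet G Y, contradiction via the edge s(u,v)
      have hXY := (mem_cutSet_iff huv).mp heCut
      rw [Set.mem_symmDiff, Set.mem_symmDiff] at hXY
      have t1 : ¬(u ∈ symmDiff X c.supp ↔ v ∈ symmDiff X c.supp) ↔
          ¬(u ∈ Y ↔ v ∈ Y) := by
        exact (mem_cutSet_iff huv).symm.trans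
          ((Set.ext_iff.mp h1 _).trans (mem_cutSet_iff huv))
      rw [Set.mem_symmDiff, Set.mem_symmDiff] at t1
      exact aux2 huL hvL hXY t1
end
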